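/- For every natural number n ≥ 1 and every simple graph G on Fin n, there exists a first-order formula ε in the language of graphs with three free variables such that for every endpoint p of pathGraph n there is a bijection f : Fin n → Fin n with the property that for all u, v : Fin n, pathGraph n satisfies ε(p, f u, f v) if and only if u and v are adjacent in G. -/

import Mathlib

open FirstOrder Language SimpleGraph

/-- A vertex of `pathGraph n` is an endpoint if it has degree at most one, i.e. its
neighbor set is a subsingleton. For `n ≥ 2` these are exactly the vertices `0` and `n-1`. -/
def IsEndpoint (n : ℕ) (p : Fin n) : Prop :=
  ((pathGraph n).neighborSet p).Subsingleton

/-!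
Seen from an endpoint `p`, the vertices of the path are told apart by their distance to `p`,
and for each fixed `k` the relations "distance `≤ k`" and "distance `= k`" are first-order
definable. Relabel the vertex `u` of `G` as the vertex at distance `u` from `p`; then `ε` is the
finite disjunction, over the edges `(u, v)` of `G`, of `d(x₀, x₁) = u ∧ d(x₀, x₂) = v`.
-/

namespace FirstOrder.Language.graph

noncomputable def distLE : ℕ → Language.graph.Formula (Fin 2)
  | 0 => Term.equal (Term.var 0) (Term.var 1)
  | k + 1 => Formula.iExs Unit
      ((Term.equal (Term.var (Sum.inl 0)) (Term.var (Sum.inr ())) ⊔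
          adj.formula₂ (Term.var (Sum.inl 0)) (Term.var (Sum.inr ()))) ⊓
        (distLE k).relabel ![Sum.inr (), Sum.inl 1])

noncomputable def distEq : ℕ → Language.graph.Formula (Fin 2)
  | 0 => distLE 0
  | k + 1 => distLE (k + 1) ⊓ ∼(distLE k)

section

variable {V : Type*} (G : SimpleGraph V)

theorem realize_distLE_zero (a b : V) :
    letI := G.structure
    (distLE 0).Realize ![a, b] ↔ a = b := by
  simp [distLE]

theorem realize_distLE_succ (k : ℕ) (a b : V) :
    letI := G.structure
    (distLE (k + 1)).Realize ![a, b] ↔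
      ∃ c, (a = c ∨ G.Adj a c) ∧ (distLE k).Realize ![c, b] := by
  let := G.structure
  have hcomp (i : Unit → V) : Sum.elim ![a, b] i ∘ ![Sum.inr (), Sum.inl 1] = ![i (), b] := by
    ext j; fin_cases j <;> rfl
  simp only [distLE, Formula.realize_iExs, Formula.realize_inf, Formula.realize_sup,
    Formula.realize_equal, Formula.realize_rel₂, Formula.realize_relabel, Term.realize_var, hcomp]
  exact (Equiv.funUnique Unit V).exists_congr_left

end

end FirstOrder.Language.graph

open FirstOrder.Language.graph

theorem pathGraph_natAbs_sub_le_succ_iff {n : ℕ} (k : ℕ) (a b : Fin n) :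
    ((a : ℤ) - b).natAbs ≤ k + 1 ↔
      ∃ c, (a = c ∨ (pathGraph n).Adj a c) ∧ ((c : ℤ) - b).natAbs ≤ k := by
  constructor
  · intro h
    by_cases hk : ((a : ℤ) - b).natAbs ≤ k
    · exact ⟨a, Or.inl rfl, hk⟩
    rcases lt_or_ge a.val b.val with hlt | hle
    · refine ⟨⟨a + 1, by omega⟩, Or.inr (pathGraph_adj.2 (Or.inl rfl)), ?_⟩
      simp only; omega
    · refine ⟨⟨a - 1, by omega⟩, Or.inr (pathGraph_adj.2 (Or.inr ?_)), ?_⟩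
      · simp only; omega
      · simp only; omega
  · rintro ⟨c, rfl | hac, hc⟩
    · omega
    · rw [pathGraph_adj] at hac
      omega

theorem pathGraph_realize_distLE {n : ℕ} (k : ℕ) (a b : Fin n) :
    letI := (pathGraph n).structure
    (distLE k).Realize ![a, b] ↔ ((a : ℤ) - b).natAbs ≤ k := by
  induction k generalizing a with
  | zero => rw [realize_distLE_zero, Fin.ext_iff]; omega
  | succ k ih => simp only [realize_distLE_succ, ih, pathGraph_natAbs_sub_le_succ_iff]

theorem pathGraph_realize_distEq {n : ℕ} (k : ℕ) (a b : Fin n) :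
    letI := (pathGraph n).structure
    (distEq k).Realize ![a, b] ↔ ((a : ℤ) - b).natAbs = k := by
  cases k with
  | zero => exact (pathGraph_realize_distLE 0 a b).trans Nat.le_zero
  | succ k =>
    simp only [distEq, Formula.realize_inf, Formula.realize_not, pathGraph_realize_distLE]
    omega

theorem IsEndpoint.val_eq {n : ℕ} {p : Fin n} (hp : IsEndpoint n p) :
    p.val = 0 ∨ p.val = n - 1 := by
  by_contra! h
  have hprev : (⟨p - 1, by omega⟩ : Fin n) ∈ (pathGraph n).neighborSet p :=
    pathGraph_adj.2 (Or.inr (by simp only; omega))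
  have hnext : (⟨p + 1, by omega⟩ : Fin n) ∈ (pathGraph n).neighborSet p :=
    pathGraph_adj.2 (Or.inl rfl)
  have := Fin.ext_iff.1 (hp hprev hnext)
  simp only at this
  omega

theorem IsEndpoint.exists_bijective_natAbs_sub {n : ℕ} {p : Fin n} (hp : IsEndpoint n p) :
    ∃ f : Fin n → Fin n, Function.Bijective f ∧ ∀ u, ((p : ℤ) - f u).natAbs = u := by
  rcases hp.val_eq with h | h
  · exact ⟨id, Function.bijective_id, fun u => by simp only [id, h]; omega⟩
  · exact ⟨Fin.rev, Fin.rev_bijective, fun u => by simp only [Fin.val_rev, h]; omega⟩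

noncomputable def edgeDistanceFormula {n : ℕ} (G : SimpleGraph (Fin n)) :
    Language.graph.Formula (Fin 3) :=
  Formula.iSup fun e : {e : Fin n × Fin n // G.Adj e.1 e.2} =>
    (distEq e.1.1).relabel ![0, 1] ⊓ (distEq e.1.2).relabel ![0, 2]

theorem pathGraph_realize_edgeDistanceFormula {n : ℕ} (G : SimpleGraph (Fin n)) {p : Fin n}
    {f : Fin n → Fin n} (hf : ∀ u, ((p : ℤ) - f u).natAbs = u) (u v : Fin n) :
    letI := (pathGraph n).structure
    (edgeDistanceFormula G).Realize ![p, f u, f v] ↔ G.Adj u v := by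
  let := (pathGraph n).structure
  have h01 : ![p, f u, f v] ∘ ![0, 1] = ![p, f u] := by ext j; fin_cases j <;> rfl
  have h02 : ![p, f u, f v] ∘ ![0, 2] = ![p, f v] := by ext j; fin_cases j <;> rfl
  simp only [edgeDistanceFormula, Formula.realize_iSup, Formula.realize_inf,
    Formula.realize_relabel, h01, h02, pathGraph_realize_distEq, hf]
  constructor
  · rintro ⟨⟨⟨u', v'⟩, hadj⟩, hu, hv⟩
    rwa [← Fin.ext hu, ← Fin.ext hv] at hadj
  · exact fun hadj => ⟨⟨(u, v), hadj⟩, rfl, rfl⟩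

theorem exists_formula_encoding_graph_general (n : ℕ) (G : SimpleGraph (Fin n)) :
    ∃ ε : Language.graph.Formula (Fin 3),
      ∀ p : Fin n, IsEndpoint n p →
        ∃ f : Fin n → Fin n, Function.Bijective f ∧
          ∀ u v : Fin n,
            (letI := (pathGraph n).structure
             ε.Realize ![p, f u, f v]) ↔ G.Adj u v := by
  refine ⟨edgeDistanceFormula G, fun p hp => ?_⟩
  obtain ⟨f, hf_bij, hf_dist⟩ := hp.exists_bijective_natAbs_sub
  exact ⟨f, hf_bij, pathGraph_realize_edgeDistanceFormula G hf_dist⟩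

theorem exists_formula_encoding_graph (n : ℕ) (hn : 1 ≤ n) (G : SimpleGraph (Fin n)) :
    ∃ ε : Language.graph.Formula (Fin 3),
      ∀ p : Fin n, IsEndpoint n p →
        ∃ f : Fin n → Fin n, Function.Bijective f ∧
          ∀ u v : Fin n,
            (letI := (pathGraph n).structure
             ε.Realize ![p, f u, f v]) ↔ G.Adj u v :=
  exists_formula_encoding_graph_general n G
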